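/- arXiv:2505.01066 — 2 statements merged into one kernel-verified Lean document; each statement's English description precedes it below -/
import Mathlib

section
/- Let K ⊂ ℝ^n be a convex body with σ_K + r·B^n ⊂ K for some r > 0 and σ_K = t·w with t ≥ 0, w ∈ S^{n-1}. If x ∈ ∂'K satisfies x = y + s·w with y ∈ σ_K + (w^⊥ ∩ int(r·B^n)) and s > 0, then ⟨w, ν_K(x)⟩ ≥ 0 and ⟨x, ν_K(x)⟩ ≥ r. -/
open MeasureTheory
open scoped RealInnerProductSpace

/-- Let `K ⊂ ℝ^n` be a convex body with `σ_K + r·B^n ⊆ K`, `σ_K = t•w`, `t ≥ 0`,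
`w ∈ S^{n-1}`. If `x ∈ ∂K` has outer unit normal `v`, and `x = y + s•w` with
`y - σ_K ∈ w^⊥`, `‖y - σ_K‖ < r` and `s > 0`, then `⟨w,v⟩ ≥ 0` and `⟨x,v⟩ ≥ r`. -/
theorem stmt_14 (n : ℕ) (hn : 2 ≤ n) (K : Set (EuclideanSpace ℝ (Fin n)))
    (hK : IsCompact K) (hconv : Convex ℝ K) (hint : (interior K).Nonempty)
    (r t s : ℝ) (hr : 0 < r) (ht : 0 ≤ t) (hs : 0 < s)
    (w v x y : EuclideanSpace ℝ (Fin n)) (hw : ‖w‖ = 1) (hv : ‖v‖ = 1)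
    (hball : Metric.closedBall (t • w) r ⊆ K)
    (hxbd : x ∈ frontier K)
    (hxy : x = y + s • w)
    (hyperp : ⟪y - t • w, w⟫ = 0) (hynear : ‖y - t • w‖ < r)
    (hnormal : ∀ z ∈ K, ⟪z, v⟫ ≤ ⟪x, v⟫) :
    0 ≤ ⟪w, v⟫ ∧ r ≤ ⟪x, v⟫ := by
  have hyK : y ∈ K := by
    apply hball
    rw [Metric.mem_closedBall, dist_eq_norm]
    exact hynear.le
  have h1 : ⟪y, v⟫ ≤ ⟪x, v⟫ := hnormal y hyK
  have hx : ⟪x, v⟫ = ⟪y, v⟫ + s * ⟪w, v⟫ := by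
    rw [hxy, inner_add_left, real_inner_smul_left]
  have hwv : 0 ≤ ⟪w, v⟫ := by nlinarith
  refine ⟨hwv, ?_⟩
  have hz : t • w + r • v ∈ K := by
    apply hball
    rw [Metric.mem_closedBall, dist_eq_norm]
    simp [norm_smul, hv, abs_of_pos hr]
  have h2 : ⟪t • w + r • v, v⟫ ≤ ⟪x, v⟫ := hnormal _ hz
  rw [inner_add_left, real_inner_smul_left, real_inner_smul_left,
    real_inner_self_eq_norm_sq, hv] at h2
  nlinarith
end

section
/- Let q > 0 and let K be a convex body in ℝ^n with o ∈ ∂K. Then the q-th dual curvature measure of the set of outer normals at the origin vanishes: C̃_{q,K}({v ∈ S^{n-1} : h_K(v) = 0}) = 0. -/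
open MeasureTheory
open scoped RealInnerProductSpace

/-- The support function of a set `K`: `h_K(v) = sup_{x ∈ K} ⟨x, v⟩`. -/
noncomputable def suppFn {n : ℕ} (K : Set (EuclideanSpace ℝ (Fin n)))
    (v : EuclideanSpace ℝ (Fin n)) : ℝ :=
  sSup ((fun x => ⟪x, v⟫) '' K)

/-- The radial function of a set `K` containing the origin:
`ρ_K(w) = max{t ≥ 0 : t•w ∈ K}`. -/
noncomputable def radialFn {n : ℕ} (K : Set (EuclideanSpace ℝ (Fin n)))
    (w : EuclideanSpace ℝ (Fin n)) : ℝ :=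
  sSup {t : ℝ | 0 ≤ t ∧ t • w ∈ K}

open Metric Set Filter Module
open scoped Topology Pointwise

/-!
If `u` is a unit outer normal of `K` at `ρ_K(v) v` with `h_K(u) = 0` and `ρ_K(v) > 0`, then
`⟪v, u⟫ = 0`, whereas `⟪p, u⟫ < 0` for every interior point `p` of `K`. So `v` lies on the
boundary of the open convex cone `C` generated by `int K`, and the integrand vanishes off
`S^{n-1} ∩ ∂C`. That set is `H^{n-1}`-null: the slices of `∂C` by the hyperplanes
`⟪x, ±bᵢ⟫ = 1` (`b` an orthonormal basis) lie in isometric copies of frontiers of convex sets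
in `ℝ^{n-1}`, which are Lebesgue null, and the radial projection `x ↦ x / ‖x‖`, 2-Lipschitz on
these slices, maps them onto a cover of `S^{n-1} ∩ ∂C`.
-/

namespace NormedSpace

variable {V : Type*} [NormedAddCommGroup V] [NormedSpace ℝ V]

theorem norm_normalize_le (x : V) : ‖normalize x‖ ≤ 1 := by
  rcases eq_or_ne x 0 with rfl | hx
  · simp [normalize_zero_eq_zero]
  · exact (norm_normalize_eq_one_iff.2 hx).le

theorem lipschitzOnWith_normalize :
    LipschitzOnWith 2 (normalize : V → V) {x | 1 ≤ ‖x‖} := by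
  refine LipschitzOnWith.of_dist_le_mul fun x (hx : 1 ≤ ‖x‖) y (hy : 1 ≤ ‖y‖) => ?_
  have hx0 : ‖x‖ ≠ 0 := by positivity
  have hy0 : ‖y‖ ≠ 0 := by positivity
  have hdecomp : normalize x - normalize y =
      ‖x‖⁻¹ • ((x - y) + (‖y‖ - ‖x‖) • normalize y) := by
    simp only [normalize, smul_add, smul_sub, smul_smul]
    match_scalars <;> field_simp
    ring
  have hnum : ‖(x - y) + (‖y‖ - ‖x‖) • normalize y‖ ≤ 2 * ‖x - y‖ := calc
    _ ≤ ‖x - y‖ + |‖y‖ - ‖x‖| * 1 := by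
      grw [norm_add_le, norm_smul, Real.norm_eq_abs, norm_normalize_le]
    _ ≤ 2 * ‖x - y‖ := by
      linarith [abs_norm_sub_norm_le y x, norm_sub_rev y x]
  rw [dist_eq_norm, dist_eq_norm, hdecomp, norm_smul, norm_inv, norm_norm, NNReal.coe_ofNat]
  exact (mul_le_mul_of_nonneg_left hnum (by positivity)).trans
    (mul_le_of_le_one_left (by positivity) (inv_le_one_of_one_le₀ hx))

end NormedSpace

section Normed

variable {E : Type*} [NormedAddCommGroup E] [NormedSpace ℝ E]

theorem Convex.closure_notMem_nhds_of_mem_frontier {s : Set E} (hs : Convex ℝ s)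
    (hso : IsOpen s) {x : E} (hx : x ∈ frontier s) : closure s ∉ 𝓝 x := by
  intro hnhds
  have hne : (interior s).Nonempty := by
    rw [hso.interior_eq, ← closure_nonempty_iff]
    exact ⟨x, frontier_subset_closure hx⟩
  have hxint := mem_interior_iff_mem_nhds.2 hnhds
  rw [hs.interior_closure_eq_interior_of_nonempty_interior hne] at hxint
  exact hx.2 hxint

theorem ConvexCone.isOpen_hull {s : Set E} (hs : Convex ℝ s) (hso : IsOpen s) :
    IsOpen (ConvexCone.hull ℝ s : Set E) := by
  have : (ConvexCone.hull ℝ s : Set E) = ⋃ r ∈ Ioi (0 : ℝ), r • s := by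
    ext x; simp [ConvexCone.mem_hull_of_convex hs]
  rw [this]
  exact isOpen_biUnion fun r hr => hso.smul₀ (ne_of_gt hr)

theorem ConvexCone.smul_mem_frontier_iff (C : ConvexCone ℝ E) (hC : IsOpen (C : Set E))
    {t : ℝ} (ht : 0 < t) {x : E} : t • x ∈ frontier (C : Set E) ↔ x ∈ frontier (C : Set E) := by
  rw [hC.frontier_eq, Set.mem_sdiff, Set.mem_sdiff]
  exact and_congr (C.closure.smul_mem_iff ht) (not_congr (C.smul_mem_iff ht))

end Normed

section Inner

variable {E : Type*} [NormedAddCommGroup E] [InnerProductSpace ℝ E]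

/-- The cone property turns a neighbourhood of `x` inside the hyperplane `⟪·, e⟫ = 1` contained
in `closure C` into a full neighbourhood, which an open convex set cannot have at a frontier
point. -/
theorem ConvexCone.frontier_inter_inner_eq_one_subset (C : ConvexCone ℝ E)
    (hC : IsOpen (C : Set E)) (e : E) :
    frontier (C : Set E) ∩ {x | ⟪x, e⟫ = 1} ⊆
      closure ({x | ⟪x, e⟫ = 1} \ closure (C : Set E)) := by
  rintro x ⟨hxC, hxe : ⟪x, e⟫ = 1⟩
  refine mem_closure_iff_nhds.2 fun U hU => by_contra fun hempty => ?_
  have hcont : ContinuousAt (fun z => ⟪z, e⟫⁻¹ • z) x :=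
    ((continuous_id.inner continuous_const).continuousAt.inv₀ (by simp [hxe])).smul
      continuousAt_id
  have hpos : ∀ᶠ z in 𝓝 x, 0 < ⟪z, e⟫ :=
    continuousAt_const.eventually_lt (g := fun z => ⟪z, e⟫) (by fun_prop) (by simp [hxe])
  refine C.convex.closure_notMem_nhds_of_mem_frontier hC hxC ?_
  filter_upwards [hcont.eventually_mem (by simpa [hxe] using hU), hpos] with z hzU hz
  refine (C.closure.smul_mem_iff (inv_pos.2 hz)).1 (by_contra fun hzC => hempty ?_)
  exact ⟨_, hzU, by simp [real_inner_smul_left, hz.ne'], hzC⟩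

theorem inner_neg_of_mem_interior {K : Set E} {u : E} (hu : u ≠ 0) (hKu : ∀ y ∈ K, ⟪y, u⟫ ≤ 0)
    {p : E} (hp : p ∈ interior K) : ⟪p, u⟫ < 0 := by
  have hcont : Continuous fun t : ℝ => p + t • u := by fun_prop
  have hlim : Tendsto (fun t : ℝ => p + t • u) (𝓝[>] 0) (𝓝 p) :=
    tendsto_nhdsWithin_of_tendsto_nhds (hcont.tendsto' 0 p (by simp))
  obtain ⟨t, htK, ht⟩ :=
    ((hlim.eventually_mem (mem_interior_iff_mem_nhds.1 hp)).and self_mem_nhdsWithin).exists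
  have hle := hKu _ htK
  rw [inner_add_left, real_inner_smul_left, real_inner_self_eq_norm_sq] at hle
  have hshift : 0 < t * ‖u‖ ^ 2 := by positivity
  linarith

theorem mem_frontier_hull_interior {K : Set E} (hconv : Convex ℝ K)
    (hint : (interior K).Nonempty) {u v : E} (hu : u ≠ 0) (hKu : ∀ y ∈ K, ⟪y, u⟫ ≤ 0)
    (hvu : ⟪v, u⟫ = 0) {t : ℝ} (ht : 0 < t) (htv : t • v ∈ K) :
    v ∈ frontier (ConvexCone.hull ℝ (interior K) : Set E) := by
  set C := ConvexCone.hull ℝ (interior K)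
  rw [(ConvexCone.isOpen_hull hconv.interior isOpen_interior).frontier_eq]
  refine ⟨?_, fun hv => ?_⟩
  · have hKC : K ⊆ closure (C : Set E) := calc
      K ⊆ closure (interior K) := by
        rw [hconv.closure_interior_eq_closure_of_nonempty_interior hint]; exact subset_closure
      _ ⊆ closure (C : Set E) := closure_mono ConvexCone.subset_hull
    exact (C.closure.smul_mem_iff ht).1 (hKC htv)
  · obtain ⟨r, hr, p, hp, rfl⟩ := (ConvexCone.mem_hull_of_convex hconv.interior).1 hv
    have hp_neg := inner_neg_of_mem_interior hu hKu hp
    rw [real_inner_smul_left] at hvu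
    nlinarith

theorem ConvexCone.mem_normalize_image_frontier_inter_inner_eq_one (C : ConvexCone ℝ E)
    (hC : IsOpen (C : Set E)) {v e : E} (hv : ‖v‖ = 1) (hvC : v ∈ frontier (C : Set E))
    (hve : 0 < ⟪v, e⟫) :
    v ∈ NormedSpace.normalize '' (frontier (C : Set E) ∩ {x | ⟪x, e⟫ = 1}) := by
  refine ⟨⟪v, e⟫⁻¹ • v, ⟨(C.smul_mem_frontier_iff hC (inv_pos.2 hve)).2 hvC, ?_⟩, ?_⟩
  · simp [real_inner_smul_left, hve.ne']
  · rw [NormedSpace.normalize_smul_of_pos (inv_pos.2 hve),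
      NormedSpace.normalize_eq_self_of_norm_eq_one hv]

theorem OrthonormalBasis.exists_inner_pos {ι : Type*} [Fintype ι] (b : OrthonormalBasis ι ℝ E)
    {v : E} (hv : v ≠ 0) : ∃ i, ∃ e ∈ ({b i, -b i} : Set E), 0 < ⟪v, e⟫ := by
  obtain ⟨i, hi⟩ : ∃ i, ⟪v, b i⟫ ≠ 0 := by
    by_contra! h
    exact hv (by simpa [real_inner_comm, h] using (b.sum_repr' v).symm)
  rcases hi.lt_or_gt with hneg | hpos
  · exact ⟨i, -b i, by simp, by rwa [inner_neg_right, neg_pos]⟩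
  · exact ⟨i, b i, by simp, hpos⟩

end Inner

section HausdorffNull

variable {E : Type*} [NormedAddCommGroup E] [InnerProductSpace ℝ E] [FiniteDimensional ℝ E]
  [MeasurableSpace E] [BorelSpace E] {m : ℕ}

theorem ConvexCone.hausdorffMeasure_frontier_inter_inner_eq_one (hE : finrank ℝ E = m + 1)
    (C : ConvexCone ℝ E) (hC : IsOpen (C : Set E)) {e : E} (he : ‖e‖ = 1) :
    μH[m] (frontier (C : Set E) ∩ {x | ⟪x, e⟫ = 1}) = 0 := by
  set H := (ℝ ∙ e)ᗮ
  have hH : finrank ℝ H = m := Submodule.finrank_add_finrank_orthogonal' <| by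
    rw [finrank_span_singleton (by rintro rfl; simp at he), hE, add_comm]
  let lift : H → E := fun h => h + e
  have hlift : Isometry lift := (isometry_add_right e).comp isometry_subtype_coe
  let proj : E → H := fun x => ⟨x - ⟪x, e⟫ • e, by
    rw [Submodule.mem_orthogonal_singleton_iff_inner_right, inner_sub_right, inner_smul_right,
      real_inner_self_eq_norm_sq, he, real_inner_comm]
    ring⟩
  have hproj : Continuous proj := by fun_prop
  have lift_proj : ∀ x, ⟪x, e⟫ = 1 → lift (proj x) = x := fun x hx => by simp [lift, proj, hx]
  set D := lift ⁻¹' closure C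
  have hD : Convex ℝ D := by
    simpa [D, lift, preimage_preimage, add_comm] using
      (C.convex.closure.translate_preimage_right e).linear_preimage H.subtype
  have hsub : frontier (C : Set E) ∩ {x | ⟪x, e⟫ = 1} ⊆ lift '' frontier D := by
    intro x hx
    refine ⟨proj x, ?_, lift_proj x hx.2⟩
    rw [(isClosed_closure.preimage hlift.continuous).frontier_eq]
    refine ⟨by simpa [D, lift_proj x hx.2] using frontier_subset_closure hx.1, fun hint => ?_⟩
    obtain ⟨z, hzD, hz, hzC⟩ := mem_closure_iff_nhds.1
      (C.frontier_inter_inner_eq_one_subset hC e hx) _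
      (hproj.continuousAt.preimage_mem_nhds (isOpen_interior.mem_nhds hint))
    exact hzC (by simpa [D, lift_proj z hz] using interior_subset hzD)
  have hHaar := isAddHaarMeasure_hausdorffMeasure (E := H)
  rw [hH] at hHaar
  refine measure_mono_null hsub ?_
  rw [hlift.hausdorffMeasure_image (Or.inl m.cast_nonneg)]
  exact hD.addHaar_frontier _

theorem ConvexCone.hausdorffMeasure_sphere_inter_frontier_eq_zero (hE : finrank ℝ E = m + 1)
    (C : ConvexCone ℝ E) (hC : IsOpen (C : Set E)) :
    μH[m] (sphere (0 : E) 1 ∩ frontier (C : Set E)) = 0 := by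
  let b := stdOrthonormalBasis ℝ E
  have hcover : sphere (0 : E) 1 ∩ frontier (C : Set E) ⊆ ⋃ i, ⋃ e ∈ ({b i, -b i} : Set E),
      NormedSpace.normalize '' (frontier (C : Set E) ∩ {x | ⟪x, e⟫ = 1}) := by
    rintro v ⟨hv, hvC⟩
    rw [mem_sphere_zero_iff_norm] at hv
    obtain ⟨i, e, he, hve⟩ := b.exists_inner_pos (v := v) (by rintro rfl; norm_num at hv)
    exact mem_iUnion.2 ⟨i, mem_iUnion₂.2 ⟨e, he,
      C.mem_normalize_image_frontier_inter_inner_eq_one hC hv hvC hve⟩⟩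
  refine measure_mono_null hcover <| measure_iUnion_null fun i =>
    (measure_biUnion_null_iff (toFinite _).countable).2 fun e he => ?_
  have he1 : ‖e‖ = 1 := by
    rcases he with rfl | rfl <;> simp [b.orthonormal.1 i]
  have hslice : frontier (C : Set E) ∩ {x | ⟪x, e⟫ = 1} ⊆ {x | 1 ≤ ‖x‖} := fun x ⟨_, hx⟩ => by
    simpa [he1, show ⟪x, e⟫ = 1 from hx] using real_inner_le_norm x e
  refine nonpos_iff_eq_zero.1 ?_
  calc μH[m] (NormedSpace.normalize '' (frontier (C : Set E) ∩ {x | ⟪x, e⟫ = 1}))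
      ≤ 2 ^ (m : ℝ) * μH[m] (frontier (C : Set E) ∩ {x | ⟪x, e⟫ = 1}) :=
        (NormedSpace.lipschitzOnWith_normalize.mono hslice).hausdorffMeasure_image_le
          m.cast_nonneg
    _ = 0 := by rw [C.hausdorffMeasure_frontier_inter_inner_eq_one hE hC he1, mul_zero]

end HausdorffNull

section Radial

variable {n : ℕ} {K : Set (EuclideanSpace ℝ (Fin n))}

theorem inner_le_suppFn (hKb : Bornology.IsBounded K) {y : EuclideanSpace ℝ (Fin n)}
    (hy : y ∈ K) (u : EuclideanSpace ℝ (Fin n)) : ⟪y, u⟫ ≤ suppFn K u := by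
  have hfun : (fun x => ⟪x, u⟫) = innerSL ℝ u := funext fun x => real_inner_comm u x
  refine le_csSup ?_ ⟨y, hy, rfl⟩
  rw [hfun]
  exact ((innerSL ℝ u).lipschitz.isBounded_image hKb).bddAbove

theorem radialFn_nonneg (K : Set (EuclideanSpace ℝ (Fin n))) (v : EuclideanSpace ℝ (Fin n)) :
    0 ≤ radialFn K v :=
  Real.sSup_nonneg fun _ ht => ht.1

theorem radialFn_zero (K : Set (EuclideanSpace ℝ (Fin n))) : radialFn K 0 = 0 := by
  by_cases h0K : (0 : EuclideanSpace ℝ (Fin n)) ∈ K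
  · have : {t : ℝ | 0 ≤ t ∧ t • (0 : EuclideanSpace ℝ (Fin n)) ∈ K} = Ici 0 := by
      ext; simp [h0K]
    rw [radialFn, this, Real.sSup_of_not_bddAbove (not_bddAbove_Ici 0)]
  · simp [radialFn, h0K]

theorem bddAbove_radialFn_set (hKb : Bornology.IsBounded K) {v : EuclideanSpace ℝ (Fin n)}
    (hv : v ≠ 0) : BddAbove {t : ℝ | 0 ≤ t ∧ t • v ∈ K} := by
  obtain ⟨R, hR⟩ := hKb.subset_closedBall 0
  refine ⟨R / ‖v‖, fun t ⟨ht, htK⟩ => ?_⟩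
  rw [le_div_iff₀ (norm_pos_iff.2 hv)]
  simpa [norm_smul, abs_of_nonneg ht] using hR htK

theorem radialFn_pos_iff (hKb : Bornology.IsBounded K) (hconv : Convex ℝ K)
    (h0K : (0 : EuclideanSpace ℝ (Fin n)) ∈ K) {v : EuclideanSpace ℝ (Fin n)} :
    0 < radialFn K v ↔ v ≠ 0 ∧ ∃ k : ℕ, ((k : ℝ) + 1)⁻¹ • v ∈ K := by
  constructor
  · intro hpos
    refine ⟨by rintro rfl; simp [radialFn_zero] at hpos, ?_⟩
    obtain ⟨t, ⟨-, htK⟩, ht⟩ := exists_lt_of_lt_csSup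
      (⟨0, le_rfl, by simpa using h0K⟩ : {t : ℝ | 0 ≤ t ∧ t • v ∈ K}.Nonempty) hpos
    obtain ⟨k, hk⟩ := exists_nat_one_div_lt ht
    refine ⟨k, ?_⟩
    have : ((k : ℝ) + 1)⁻¹ • v = (((k : ℝ) + 1)⁻¹ / t) • (t • v) := by
      rw [smul_smul, div_mul_cancel₀ _ ht.ne']
    rw [this]
    exact hconv.smul_mem_of_zero_mem h0K htK
      ⟨by positivity, (div_le_one ht).2 (by simpa using hk.le)⟩
  · rintro ⟨hv, k, hk⟩
    exact (by positivity : (0 : ℝ) < ((k : ℝ) + 1)⁻¹).trans_le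
      (le_csSup (bddAbove_radialFn_set hKb hv) ⟨by positivity, hk⟩)

theorem measurableSet_radialFn_pos (hK : IsClosed K) (hKb : Bornology.IsBounded K)
    (hconv : Convex ℝ K) (h0K : (0 : EuclideanSpace ℝ (Fin n)) ∈ K) :
    MeasurableSet {v | 0 < radialFn K v} := by
  have : {v | 0 < radialFn K v} =
      {0}ᶜ ∩ ⋃ k : ℕ, (fun v => ((k : ℝ) + 1)⁻¹ • v) ⁻¹' K := by
    ext v; simp [radialFn_pos_iff hKb hconv h0K]
  rw [this]
  exact (measurableSet_singleton 0).compl.inter <|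
    .iUnion fun k => (hK.preimage (continuous_const_smul _)).measurableSet

theorem mem_frontier_hull_interior_of_suppFn_eq_zero (hKb : Bornology.IsBounded K)
    (hconv : Convex ℝ K) (hint : (interior K).Nonempty) (h0K : (0 : EuclideanSpace ℝ (Fin n)) ∈ K)
    {u v : EuclideanSpace ℝ (Fin n)} (hu : u ≠ 0)
    (hnormal : ∀ y ∈ K, ⟪y, u⟫ ≤ ⟪radialFn K v • v, u⟫) (hsupp : suppFn K u = 0)
    (hρ : 0 < radialFn K v) :
    v ∈ frontier (ConvexCone.hull ℝ (interior K) : Set (EuclideanSpace ℝ (Fin n))) := by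
  obtain ⟨-, k, hk⟩ := (radialFn_pos_iff hKb hconv h0K).1 hρ
  have hKu : ∀ y ∈ K, ⟪y, u⟫ ≤ 0 := fun y hy => hsupp ▸ inner_le_suppFn hKb hy u
  have hvu : ⟪v, u⟫ = 0 := by
    have hle := hKu _ hk
    have hge := hnormal 0 h0K
    rw [real_inner_smul_left] at hle hge
    rw [inner_zero_left] at hge
    exact le_antisymm (nonpos_of_mul_nonpos_right hle (by positivity))
      ((mul_nonneg_iff_of_pos_left hρ).1 hge)
  exact mem_frontier_hull_interior hconv hint hu hKu hvu (by positivity) hk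

end Radial

theorem stmt_18_general (n : ℕ) (hn : 2 ≤ n) (q : ℝ) (hq : 0 < q)
    (K : Set (EuclideanSpace ℝ (Fin n)))
    (hK : IsCompact K) (hconv : Convex ℝ K) (hint : (interior K).Nonempty)
    (h0K : (0 : EuclideanSpace ℝ (Fin n)) ∈ K) :
    ∫ v in {v : EuclideanSpace ℝ (Fin n) | v ∈ Metric.sphere 0 1 ∧
        ∃ u : EuclideanSpace ℝ (Fin n), ‖u‖ = 1 ∧
          (∀ y ∈ K, ⟪y, u⟫ ≤ ⟪radialFn K v • v, u⟫) ∧ suppFn K u = 0},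
      (radialFn K v) ^ q ∂(μH[(n : ℝ) - 1]) = 0 := by
  obtain ⟨m, rfl⟩ : ∃ m, n = m + 1 := ⟨n - 1, by omega⟩
  rw [show ((m + 1 : ℕ) : ℝ) - 1 = m by push_cast; ring]
  set C := ConvexCone.hull ℝ (interior K)
  have hnull : μH[m] (sphere 0 1 ∩ frontier (C : Set (EuclideanSpace ℝ (Fin (m + 1))))) = 0 :=
    C.hausdorffMeasure_sphere_inter_frontier_eq_zero finrank_euclideanSpace_fin
      (ConvexCone.isOpen_hull hconv.interior isOpen_interior)
  refine integral_eq_zero_of_ae <| measure_mono_null (t := {v | 0 < radialFn K v})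
    (fun v hv => (radialFn_nonneg K v).lt_of_ne' fun h => hv (by simp [h, hq.ne'])) ?_
  rw [Measure.restrict_apply (measurableSet_radialFn_pos hK.isClosed hK.isBounded hconv h0K)]
  refine measure_mono_null ?_ hnull
  rintro v ⟨hρ, hv, u, hu, hnormal, hsupp⟩
  exact ⟨hv, mem_frontier_hull_interior_of_suppFn_eq_zero hK.isBounded hconv hint h0K
    (by rintro rfl; simp at hu) hnormal hsupp hρ⟩

/-- Let `q > 0` and `K` be a convex body in `ℝ^n` with `o ∈ ∂K`. The `q`-th dual curvature
measure of the set `{v ∈ S^{n-1} : h_K(v) = 0}` of outer normals at the origin vanishes: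
`∫_{α*_K(ω)} ρ_K^q dH^{n-1} = 0`, where `α*_K(ω)` is the reverse radial Gauss image,
i.e. the set of `v ∈ S^{n-1}` such that some outer unit normal `u` of `K` at `ρ_K(v)·v`
satisfies `h_K(u) = 0`. -/
theorem stmt_18 (n : ℕ) (hn : 2 ≤ n) (q : ℝ) (hq : 0 < q)
    (K : Set (EuclideanSpace ℝ (Fin n)))
    (hK : IsCompact K) (hconv : Convex ℝ K) (hint : (interior K).Nonempty)
    (h0K : (0 : EuclideanSpace ℝ (Fin n)) ∈ K)
    (h0bd : (0 : EuclideanSpace ℝ (Fin n)) ∈ frontier K) :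
    ∫ v in {v : EuclideanSpace ℝ (Fin n) | v ∈ Metric.sphere 0 1 ∧
        ∃ u : EuclideanSpace ℝ (Fin n), ‖u‖ = 1 ∧
          (∀ y ∈ K, ⟪y, u⟫ ≤ ⟪radialFn K v • v, u⟫) ∧ suppFn K u = 0},
      (radialFn K v) ^ q ∂(μH[(n : ℝ) - 1]) = 0 :=
  stmt_18_general n hn q hq K hK hconv hint h0K
end
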